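/- Let D be a nonempty finite set of forbidden patterns and let r₁, r₂ be as defined. If cap(D) = 0, then for every n ≥ 1 one has δ_n(D) ≤ 2^{r₁ + r₂}; that is, the size of any code avoiding D is bounded above by the constant 2^{r₁+r₂} independently of the word length. -/

import Mathlib

/-!
If `2^(r₁+r₂) < δ_n(D)`, pigeonhole gives two distinct words `u, v` of an optimal code that agree
on their first `r₁` and last `r₂` letters, so `u - v` and `v - u` begin with `r₁` and end with `r₂`
zeros. Concatenating `k` blocks, each `u` or `v` followed by `z ≥ max |p|` zeros, yields `2^k`
words whose pairwise differences are again such blocks (or zero blocks) separated by `z` zeros.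
A pattern fits into a window around a single block; having at most `r₁` leading and `r₂` trailing
zeros, it then already occurs in `u - v` or `v - u`, which is impossible. Hence
`δ_{k(n+z)}(D) ≥ 2^k` and `cap(D) ≥ 1/(n+z) > 0`.
-/

def boolToInt (b : Bool) : ℤ := if b then 1 else 0

def diffWord (u v : List Bool) : List ℤ :=
  List.zipWith (fun a b => boolToInt a - boolToInt b) u v

def IsPattern (p : List ℤ) : Prop :=
  p ≠ [] ∧ ∀ x ∈ p, x = -1 ∨ x = 0 ∨ x = 1

def AvoidsCode (D : Finset (List ℤ)) (C : Finset (List Bool)) : Prop :=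
  ∀ u ∈ C, ∀ v ∈ C, u ≠ v → ∀ p ∈ D, ¬ p <:+: diffWord u v

noncomputable def delta (D : Finset (List ℤ)) (n : ℕ) : ℕ :=
  sSup {k : ℕ | ∃ C : Finset (List Bool),
    (∀ u ∈ C, u.length = n) ∧ AvoidsCode D C ∧ C.card = k}

noncomputable def cap (D : Finset (List ℤ)) : ℝ :=
  Filter.limsup (fun n : ℕ => Real.logb 2 (delta D n) / n) Filter.atTop

open List Filter Real

namespace ZeroCapacity

section Factors

variable {α : Type*} {p x y w s : List α}

theorem infix_append_or_infix_append_of_length_le (h : p <:+: x ++ y ++ w)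
    (hp : p.length ≤ y.length) : p <:+: x ++ y ∨ p <:+: y ++ w := by
  obtain ⟨a, b, hab⟩ := h
  simp only [append_assoc] at hab
  rcases append_eq_append_iff.1 hab with ⟨c, rfl, hc⟩ | ⟨c, rfl, hc⟩
  · have hpre : p <+: c ++ y :=
      prefix_of_prefix_length_le ⟨b, hc⟩ ⟨w, by simp⟩ (by simp; omega)
    exact .inl (hpre.isInfix.trans ⟨a, [], by simp⟩)
  · exact .inr ⟨c, b, by simp [hc]⟩

theorem infix_append_flatMap_of_length_le {β : Type*} (g : β → List α)
    (hp : p.length ≤ s.length) :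
    ∀ l : List β, p <:+: s ++ l.flatMap (fun b => g b ++ s) →
      p <:+: s ∨ ∃ b ∈ l, p <:+: s ++ g b ++ s
  | [], h => .inl (by simpa using h)
  | b :: l, h => by
    rw [flatMap_cons, ← append_assoc, ← append_assoc] at h
    rcases infix_append_or_infix_append_of_length_le h hp with h | h
    · exact .inr ⟨b, mem_cons_self, h⟩
    · rcases infix_append_flatMap_of_length_le g hp l h with h | ⟨c, hc, h⟩
      · exact .inl h
      · exact .inr ⟨c, mem_cons_of_mem b hc, h⟩

theorem not_infix_replicate {a : α} (hp : ∃ x ∈ p, x ≠ a) (m : ℕ) : ¬ p <:+: replicate m a := by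
  obtain ⟨x, hx, hxa⟩ := hp
  exact fun h => hxa (eq_of_mem_replicate (h.subset hx))

theorem infix_of_infix_replicate_append {a : α} {r i : ℕ} {e : List α} (hp : ∃ x ∈ p, x ≠ a)
    (hr : ¬ replicate (r + 1) a <+: p) (he : replicate r a <+: e)
    (h : p <:+: replicate i a ++ e) : p <:+: e := by
  obtain ⟨m, rfl⟩ := he
  induction i with
  | zero => simpa using h
  | succ i ih =>
    rw [replicate_succ, cons_append, infix_cons_iff] at h
    refine h.elim (fun hpre => ?_) ih
    have hrun : replicate (r + 1) a <+: a :: (replicate i a ++ (replicate r a ++ m)) :=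
      ⟨replicate i a ++ m, by
        simp [← append_assoc, replicate_append_replicate, replicate_succ, add_comm]⟩
    rcases prefix_or_prefix_of_prefix hpre hrun with hpre | hpre
    · exact absurd hpre.isInfix (not_infix_replicate hp _)
    · exact absurd hpre hr

theorem infix_of_infix_replicate_append_replicate {a : α} {r₁ r₂ i j : ℕ} {e : List α}
    (hp : ∃ x ∈ p, x ≠ a) (hp₁ : ¬ replicate (r₁ + 1) a <+: p)
    (hp₂ : ¬ replicate (r₂ + 1) a <:+ p) (he₁ : replicate r₁ a <+: e)
    (he₂ : replicate r₂ a <:+ e) (h : p <:+: replicate i a ++ e ++ replicate j a) :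
    p <:+: e := by
  have h₁ : p <:+: e ++ replicate j a :=
    infix_of_infix_replicate_append hp hp₁ (he₁.trans (prefix_append e _))
      (by rwa [← append_assoc])
  rw [← reverse_infix] at h₁ ⊢
  rw [reverse_append, reverse_replicate] at h₁
  refine infix_of_infix_replicate_append (r := r₂) (by simpa using hp) ?_ ?_ h₁
  · rwa [← reverse_replicate, reverse_prefix]
  · rwa [← reverse_replicate, reverse_prefix]

theorem eq_of_flatMap_eq {β : Type*} {f : β → List α} (hf : Function.Injective f)
    (hlen : ∀ b c, (f b).length = (f c).length) :
    ∀ {l₁ l₂ : List β}, l₁.length = l₂.length → l₁.flatMap f = l₂.flatMap f → l₁ = l₂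
  | [], [], _, _ => rfl
  | b :: l₁, c :: l₂, hl, h => by
    rw [flatMap_cons, flatMap_cons] at h
    obtain ⟨hbc, hrest⟩ := append_inj h (hlen b c)
    rw [hf hbc, eq_of_flatMap_eq hf hlen (by simpa using hl) hrest]

theorem not_infix_flatMap_append_replicate {β : Type*} {a : α} {z r₁ r₂ : ℕ}
    (g : β → List α) (l : List β) (hpz : p.length ≤ z) (hp : ∃ x ∈ p, x ≠ a)
    (hp₁ : ¬ replicate (r₁ + 1) a <+: p) (hp₂ : ¬ replicate (r₂ + 1) a <:+ p)
    (hg : ∀ b, ¬ p <:+: g b ∧ replicate r₁ a <+: g b ∧ replicate r₂ a <:+ g b) :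
    ¬ p <:+: l.flatMap (fun b => g b ++ replicate z a) := by
  intro h
  rcases infix_append_flatMap_of_length_le g (by simpa using hpz) l
    (h.trans (suffix_append _ _).isInfix) with h | ⟨b, -, h⟩
  · exact not_infix_replicate hp z h
  · obtain ⟨hgb, hgb₁, hgb₂⟩ := hg b
    exact hgb (infix_of_infix_replicate_append_replicate hp hp₁ hp₂ hgb₁ hgb₂ h)

theorem exists_ne_of_not_infix {a : α} {d : List α} {r : ℕ}
    (hp : ∀ k, replicate k a <+: p → k ≤ r) (hd : replicate r a <+: d) (hpd : ¬ p <:+: d) :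
    ∃ x ∈ p, x ≠ a := by
  by_contra! hall
  have hrep : p = replicate p.length a := eq_replicate_iff.2 ⟨rfl, hall⟩
  have hpr : p.length ≤ r := hp _ (hrep ▸ prefix_refl p)
  exact hpd ((prefix_replicate_iff.2 ⟨hpr, hrep⟩).trans hd).isInfix

end Factors

section DiffWord

theorem diffWord_self (x : List Bool) : diffWord x x = replicate x.length 0 := by
  simp [diffWord, zipWith_self]

theorem diffWord_append {x x' : List Bool} (y y' : List Bool) (h : x.length = x'.length) :
    diffWord (x ++ y) (x' ++ y') = diffWord x x' ++ diffWord y y' :=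
  zipWith_append h

theorem diffWord_flatMap {β : Type*} {f : β → List Bool} {n : ℕ}
    (hf : ∀ b, (f b).length = n) :
    ∀ {l₁ l₂ : List β}, l₁.length = l₂.length →
      diffWord (l₁.flatMap f) (l₂.flatMap f) =
        (l₁.zip l₂).flatMap fun bc => diffWord (f bc.1) (f bc.2)
  | [], [], _ => rfl
  | b :: l₁, c :: l₂, hl => by
    rw [flatMap_cons, flatMap_cons, zip_cons_cons, flatMap_cons,
      diffWord_append _ _ (by rw [hf, hf]), diffWord_flatMap hf (by simpa using hl)]

theorem diffWord_flatMap_append_replicate {β : Type*} {f : β → List Bool} {n : ℕ} (z : ℕ)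
    (hf : ∀ b, (f b).length = n) {l₁ l₂ : List β} (hl : l₁.length = l₂.length) :
    diffWord (l₁.flatMap (f · ++ replicate z false)) (l₂.flatMap (f · ++ replicate z false)) =
      (l₁.zip l₂).flatMap fun bc => diffWord (f bc.1) (f bc.2) ++ replicate z 0 :=
  (diffWord_flatMap (n := n + z) (by simp [hf]) hl).trans <| flatMap_congr fun bc _ => by
    rw [diffWord_append _ _ (by rw [hf, hf]), diffWord_self, length_replicate]

theorem replicate_prefix_diffWord {u v : List Bool} {r : ℕ} (h : u.take r = v.take r)
    (hr : r ≤ u.length) : replicate r 0 <+: diffWord u v := by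
  have htake : (diffWord u v).take r = replicate r 0 := by
    rw [diffWord, take_zipWith, ← h, ← diffWord, diffWord_self, length_take,
      min_eq_left hr]
  exact htake ▸ take_prefix r _

theorem replicate_suffix_diffWord {u v : List Bool} {s : ℕ} (h : u.drop s = v.drop s) :
    replicate (u.length - s) 0 <:+ diffWord u v := by
  have hdrop : (diffWord u v).drop s = replicate (u.length - s) 0 := by
    rw [diffWord, drop_zipWith, ← h, ← diffWord, diffWord_self, length_drop]
  exact hdrop ▸ drop_suffix s _

theorem zero_margins_diffWord {x y : List Bool} {n r₁ r₂ : ℕ} (hx : x.length = n)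
    (hr₁ : r₁ ≤ n) (hr₂ : r₂ ≤ n) (htake : x.take r₁ = y.take r₁)
    (hdrop : x.drop (n - r₂) = y.drop (n - r₂)) :
    replicate r₁ 0 <+: diffWord x y ∧ replicate r₂ 0 <:+ diffWord x y := by
  refine ⟨replicate_prefix_diffWord htake (hx ▸ hr₁), ?_⟩
  have := replicate_suffix_diffWord hdrop
  rwa [hx, Nat.sub_sub_self hr₂] at this

end DiffWord

section Delta

variable {D : Finset (List ℤ)} {n : ℕ}

theorem AvoidsCode.mono {C C' : Finset (List Bool)} (h : AvoidsCode D C) (hC' : C' ⊆ C) :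
    AvoidsCode D C' :=
  fun u hu v hv => h u (hC' hu) v (hC' hv)

def wordsOfLength (n : ℕ) : Finset (List Bool) :=
  Finset.univ.map ⟨List.Vector.toList, List.Vector.toList_injective (n := n)⟩

theorem mem_wordsOfLength {w : List Bool} : w ∈ wordsOfLength n ↔ w.length = n :=
  ⟨fun h => by obtain ⟨v, -, rfl⟩ := Finset.mem_map.1 h; exact v.toList_length,
    fun h => Finset.mem_map.2 ⟨⟨w, h⟩, Finset.mem_univ _, rfl⟩⟩

theorem card_wordsOfLength (n : ℕ) : (wordsOfLength n).card = 2 ^ n := by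
  rw [wordsOfLength, Finset.card_map, Finset.card_univ, card_vector, Fintype.card_bool]

def codeSizes (D : Finset (List ℤ)) (n : ℕ) : Set ℕ :=
  {k | ∃ C : Finset (List Bool), (∀ u ∈ C, u.length = n) ∧ AvoidsCode D C ∧ C.card = k}

theorem card_le_two_pow {C : Finset (List Bool)} (hC : ∀ u ∈ C, u.length = n) :
    C.card ≤ 2 ^ n :=
  card_wordsOfLength n ▸ Finset.card_le_card fun u hu => mem_wordsOfLength.2 (hC u hu)

theorem bddAbove_codeSizes (D : Finset (List ℤ)) (n : ℕ) : BddAbove (codeSizes D n) :=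
  ⟨2 ^ n, by rintro _ ⟨C, hC, -, rfl⟩; exact card_le_two_pow hC⟩

theorem card_le_delta {C : Finset (List Bool)} (hC : ∀ u ∈ C, u.length = n)
    (hav : AvoidsCode D C) : C.card ≤ delta D n :=
  le_csSup (bddAbove_codeSizes D n) ⟨C, hC, hav, rfl⟩

theorem exists_code_card_eq_delta (D : Finset (List ℤ)) (n : ℕ) :
    ∃ C : Finset (List Bool), (∀ u ∈ C, u.length = n) ∧ AvoidsCode D C ∧ C.card = delta D n :=
  Nat.sSup_mem (s := codeSizes D n) ⟨0, ∅, by simp, fun u hu => by simp at hu, rfl⟩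
    (bddAbove_codeSizes D n)

theorem delta_le_two_pow (D : Finset (List ℤ)) (n : ℕ) : delta D n ≤ 2 ^ n := by
  obtain ⟨C, hC, -, hcard⟩ := exists_code_card_eq_delta D n
  exact hcard ▸ card_le_two_pow hC

theorem one_le_delta (D : Finset (List ℤ)) (n : ℕ) : 1 ≤ delta D n := by
  simpa using card_le_delta (D := D) (C := {replicate n false}) (by simp) (by simp [AvoidsCode])

theorem logb_delta_div_le_one (D : Finset (List ℤ)) (n : ℕ) : logb 2 (delta D n) / n ≤ 1 := by
  rcases n.eq_zero_or_pos with rfl | hn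
  · simp
  rw [div_le_one (by positivity)]
  calc logb 2 (delta D n) ≤ logb 2 ((2 : ℝ) ^ n) :=
        logb_le_logb_of_le one_lt_two (by exact_mod_cast one_le_delta D n)
          (by exact_mod_cast delta_le_two_pow D n)
    _ = n := by rw [logb_pow, logb_self_eq_one one_lt_two, mul_one]

theorem cap_pos_of_two_pow_le_delta {m : ℕ} (hm : 0 < m)
    (h : ∀ k, 2 ^ k ≤ delta D (k * m)) : 0 < cap D := by
  have hfreq : ∃ᶠ N in atTop, (1 / m : ℝ) ≤ logb 2 (delta D N) / N := by
    refine frequently_atTop.2 fun a => ⟨(a + 1) * m, by nlinarith, ?_⟩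
    have hk : ((a + 1 : ℕ) : ℝ) ≤ logb 2 (delta D ((a + 1) * m)) :=
      calc ((a + 1 : ℕ) : ℝ) = logb 2 ((2 : ℝ) ^ (a + 1)) := by
            rw [logb_pow, logb_self_eq_one one_lt_two, mul_one]
        _ ≤ _ := logb_le_logb_of_le one_lt_two (by positivity) (by exact_mod_cast h (a + 1))
    rw [le_div_iff₀ (by positivity), Nat.cast_mul, ← mul_assoc, one_div_mul_eq_div,
      div_mul_cancel₀ _ (by positivity)]
    exact hk
  exact (by positivity : (0 : ℝ) < 1 / m).trans_le
    (le_limsup_of_frequently_le hfreq (isBoundedUnder_of ⟨1, logb_delta_div_le_one D⟩))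

theorem exists_ne_take_eq_drop_eq {C : Finset (List Bool)} {r₁ r₂ : ℕ}
    (hC : ∀ u ∈ C, u.length = n) (hr : r₁ + r₂ ≤ n) (hcard : 2 ^ (r₁ + r₂) < C.card) :
    ∃ u ∈ C, ∃ v ∈ C, u ≠ v ∧ u.take r₁ = v.take r₁ ∧ u.drop (n - r₂) = v.drop (n - r₂) := by
  have hmaps : Set.MapsTo (fun u : List Bool => (u.take r₁, u.drop (n - r₂))) C
      (wordsOfLength r₁ ×ˢ wordsOfLength r₂ : Finset _) := by
    intro u hu
    simp only [Finset.coe_product, Set.mem_prod, Finset.mem_coe, mem_wordsOfLength,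
      length_take, length_drop, hC u hu]
    omega
  obtain ⟨u, hu, v, hv, huv, h⟩ := Finset.exists_ne_map_eq_of_card_lt_of_maps_to
    (by rwa [Finset.card_product, card_wordsOfLength, card_wordsOfLength, ← pow_add]) hmaps
  exact ⟨u, hu, v, hv, huv, Prod.ext_iff.1 h⟩

end Delta

section PadCode

variable {D : Finset (List ℤ)} {n r₁ r₂ : ℕ} {u v : List Bool}

def padCode (u v : List Bool) (z k : ℕ) : Finset (List Bool) :=
  (wordsOfLength k).image (flatMap fun b => cond b u v ++ replicate z false)

theorem length_cond (hu : u.length = n) (hv : v.length = n) (b : Bool) :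
    (cond b u v).length = n := by
  cases b <;> assumption

theorem length_of_mem_padCode (hu : u.length = n) (hv : v.length = n) {z k : ℕ}
    {w : List Bool} (hw : w ∈ padCode u v z k) : w.length = k * (n + z) := by
  obtain ⟨l, hl, rfl⟩ := Finset.mem_image.1 hw
  simp [length_flatMap, length_cond hu hv, mem_wordsOfLength.1 hl]

theorem card_padCode (hu : u.length = n) (hv : v.length = n) (huv : u ≠ v) (z k : ℕ) :
    (padCode u v z k).card = 2 ^ k := by
  have hblk_inj : Function.Injective fun b => cond b u v ++ replicate z false := by
    intro b c h
    have := (append_inj h (by rw [length_cond hu hv, length_cond hu hv])).1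
    cases b <;> cases c <;> simp_all [eq_comm]
  have hinj : Set.InjOn (flatMap fun b => cond b u v ++ replicate z false) (wordsOfLength k) :=
    fun l₁ hl₁ l₂ hl₂ => eq_of_flatMap_eq hblk_inj (fun b c => by simp [length_cond hu hv])
      (by rw [mem_wordsOfLength.1 hl₁, mem_wordsOfLength.1 hl₂])
  rw [padCode, Finset.card_image_of_injOn hinj, card_wordsOfLength]

theorem avoidsCode_padCode (hu : u.length = n) (hv : v.length = n) (huv : u ≠ v)
    (hr : r₁ + r₂ ≤ n) (htake : u.take r₁ = v.take r₁)
    (hdrop : u.drop (n - r₂) = v.drop (n - r₂))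
    (hD₁ : ∀ k : ℕ, (∃ p ∈ D, replicate k (0:ℤ) <+: p) → k ≤ r₁)
    (hD₂ : ∀ k : ℕ, (∃ p ∈ D, replicate k (0:ℤ) <:+ p) → k ≤ r₂)
    (havoid : AvoidsCode D {u, v}) (k : ℕ) : AvoidsCode D (padCode u v (D.sup length) k) := by
  have hmargins : ∀ b c : Bool, replicate r₁ 0 <+: diffWord (cond b u v) (cond c u v) ∧
      replicate r₂ 0 <:+ diffWord (cond b u v) (cond c u v) := fun b c =>
    zero_margins_diffWord (length_cond hu hv b) (by omega) (by omega)
      (by cases b <;> cases c <;> simp [htake]) (by cases b <;> cases c <;> simp [hdrop])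
  rintro _ hw₁ _ hw₂ - p hp
  obtain ⟨l₁, hl₁, rfl⟩ := Finset.mem_image.1 hw₁
  obtain ⟨l₂, hl₂, rfl⟩ := Finset.mem_image.1 hw₂
  have hp₀ : ∃ x ∈ p, x ≠ 0 := exists_ne_of_not_infix (fun j hj => hD₁ j ⟨p, hp, hj⟩)
    (hmargins true false).1 (havoid u (by simp) v (by simp) huv p hp)
  have hpg : ∀ b c : Bool, ¬ p <:+: diffWord (cond b u v) (cond c u v) := by
    intro b c
    by_cases hbc : cond b u v = cond c u v
    · simpa [hbc, diffWord_self] using not_infix_replicate hp₀ _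
    · exact havoid _ (by cases b <;> simp) _ (by cases c <;> simp) hbc p hp
  rw [diffWord_flatMap_append_replicate _ (length_cond hu hv)
    (by rw [mem_wordsOfLength.1 hl₁, mem_wordsOfLength.1 hl₂])]
  exact not_infix_flatMap_append_replicate _ _ (Finset.le_sup hp) hp₀
    (fun h => absurd (hD₁ _ ⟨p, hp, h⟩) (by omega))
    (fun h => absurd (hD₂ _ ⟨p, hp, h⟩) (by omega))
    fun bc => ⟨hpg bc.1 bc.2, hmargins bc.1 bc.2⟩

end PadCode

end ZeroCapacity

open ZeroCapacity in
theorem zero_capacity_bounded_codes_general (D : Finset (List ℤ)) (r₁ r₂ : ℕ)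
    (hr₁ : (∃ p ∈ D, List.replicate r₁ (0:ℤ) <+: p) ∧
      ∀ k : ℕ, (∃ p ∈ D, List.replicate k (0:ℤ) <+: p) → k ≤ r₁)
    (hr₂ : (∃ p ∈ D, List.replicate r₂ (0:ℤ) <:+ p) ∧
      ∀ k : ℕ, (∃ p ∈ D, List.replicate k (0:ℤ) <:+ p) → k ≤ r₂)
    (hcap : cap D = 0) :
    ∀ n : ℕ, 1 ≤ n → delta D n ≤ 2 ^ (r₁ + r₂) := by
  intro n _
  by_contra! hbig
  have hr : r₁ + r₂ < n :=
    (Nat.pow_lt_pow_iff_right one_lt_two).1 (hbig.trans_le (delta_le_two_pow D n))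
  obtain ⟨C, hC, hCavoid, hCcard⟩ := exists_code_card_eq_delta D n
  obtain ⟨u, hu, v, hv, huv, htake, hdrop⟩ :=
    exists_ne_take_eq_drop_eq hC hr.le (hCcard ▸ hbig)
  have hpair : AvoidsCode D {u, v} := hCavoid.mono (by simp [Finset.insert_subset_iff, hu, hv])
  have hcode : ∀ k, 2 ^ k ≤ delta D (k * (n + D.sup List.length)) := fun k =>
    card_padCode (hC u hu) (hC v hv) huv _ k ▸ card_le_delta
      (fun _ => length_of_mem_padCode (hC u hu) (hC v hv))
      (avoidsCode_padCode (hC u hu) (hC v hv) huv hr.le htake hdrop hr₁.2 hr₂.2 hpair k)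
  exact (cap_pos_of_two_pow_le_delta (by omega) hcode).ne' hcap

/-- if `cap(D) = 0`, then every code avoiding `D` has size at most
`2^{r₁+r₂}`, independently of the word length. -/
theorem zero_capacity_bounded_codes (D : Finset (List ℤ)) (hDne : D.Nonempty)
    (hD : ∀ p ∈ D, IsPattern p) (r₁ r₂ : ℕ)
    (hr₁ : (∃ p ∈ D, List.replicate r₁ (0:ℤ) <+: p) ∧
      ∀ k : ℕ, (∃ p ∈ D, List.replicate k (0:ℤ) <+: p) → k ≤ r₁)
    (hr₂ : (∃ p ∈ D, List.replicate r₂ (0:ℤ) <:+ p) ∧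
      ∀ k : ℕ, (∃ p ∈ D, List.replicate k (0:ℤ) <:+ p) → k ≤ r₂)
    (hcap : cap D = 0) :
    ∀ n : ℕ, 1 ≤ n → delta D n ≤ 2 ^ (r₁ + r₂) :=
  zero_capacity_bounded_codes_general D r₁ r₂ hr₁ hr₂ hcap
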